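/- Let ψ ∈ L¹([0,T]) with ψ(0) = 0, ψ being β-Hölder continuous (β ∈ (0,1]) and differentiable on (0,T] with ψ' positive and nonincreasing on (0,T]. With λ_j = (π(j−1/2)/T)^{−2} and f_j(t) = √(2/T) ∫₀^t ψ(s) cos((t−s)/√λ_j) ds, one has ‖f_j‖_∞ ≤ 3√(2λ_j/T) ψ(√λ_j) ≤ C λ_j^{(1+β)/2} ≤ C' j^{−(1+β)} for constants depending only on T, β and the Hölder constant of ψ. -/

import Mathlib

open Real MeasureTheory Filter Topology Set Finset

/-!
Since `ψ 0 = 0`, integration by parts turns `∫₀ᵗ ψ(s) cos((t-s)/c) ds`, with `c = √λ_j ≤ T`, into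
`c ∫₀ᵗ ψ'(s) sin((t-s)/c) ds`. On `[0, min t c]` the sine is bounded by `1` and `∫ ψ' ≤ ψ(c)`.
On `[c, t]` the weight `ψ'` is nonnegative and nonincreasing: folding the integral onto a single
half-period `πc` produces an alternating sum of values of `ψ'`, bounded by `ψ'(c)`, so this part
is at most `2cψ'(c)`, and `cψ'(c) ≤ ψ(c)` by concavity of `ψ`. Hence the integral is at most
`3cψ(c)`. Finally `ψ(c) ≤ H c^β` by Hölder continuity at `0`, and `c ≤ 2T/(πj)`.
-/

lemma alternating_sum_range_mem_Icc {α : Type*} [Ring α] [PartialOrder α] [IsOrderedAddMonoid α]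
    {b : ℕ → α} (hb : Antitone b) (hb0 : ∀ k, 0 ≤ b k) (n : ℕ) :
    ∑ k ∈ range n, (-1) ^ k * b k ∈ Icc 0 (b 0) := by
  induction n generalizing b with
  | zero => simpa using hb0 0
  | succ n ih =>
    obtain ⟨h0, h1⟩ := ih (b := fun k => b (k + 1)) (fun _ _ h => hb (Nat.succ_le_succ h))
      (fun k => hb0 (k + 1))
    rw [sum_range_succ']
    simp only [pow_succ, mul_neg_one, neg_mul, sum_neg_distrib, pow_zero, one_mul]
    rw [neg_add_eq_sub]
    exact ⟨sub_nonneg.2 (h1.trans (hb (Nat.zero_le _))), sub_le_self _ h0⟩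

lemma continuousOn_of_abs_sub_le_mul_rpow {f : ℝ → ℝ} {s : Set ℝ} {C β : ℝ} (hβ : 0 < β)
    (hf : ∀ x ∈ s, ∀ y ∈ s, |f x - f y| ≤ C * |x - y| ^ β) : ContinuousOn f s := by
  intro x hx
  have hlim : Tendsto (fun y => C * |y - x| ^ β) (𝓝 x) (𝓝 0) := by
    have : Continuous fun y => C * |y - x| ^ β :=
      continuous_const.mul <| (continuous_id.sub continuous_const).abs.rpow_const
        fun _ => Or.inr hβ.le
    simpa [Real.zero_rpow hβ.ne'] using this.tendsto x
  refine tendsto_iff_dist_tendsto_zero.2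
    (squeeze_zero' (.of_forall fun _ => dist_nonneg) ?_ (hlim.mono_left nhdsWithin_le_nhds))
  filter_upwards [self_mem_nhdsWithin] with y hy using hf y hy x hx

lemma integral_abs_sin_div (t a : ℝ) {c : ℝ} (hc : 0 < c) :
    ∫ u in a..a + π * c, |sin ((t - u) / c)| = 2 * c := by
  have hper : Function.Periodic (fun v => |sin v|) π := fun v => by simp [sin_add_pi]
  have hsin : ∫ v in (0 : ℝ)..0 + π, |sin v| = 2 := by
    rw [zero_add, show (2 : ℝ) = ∫ v in (0 : ℝ)..π, sin v by norm_num [integral_sin]]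
    refine intervalIntegral.integral_congr fun v hv => abs_of_nonneg ?_
    rw [uIcc_of_le pi_pos.le] at hv
    exact sin_nonneg_of_nonneg_of_le_pi hv.1 hv.2
  simp_rw [sub_div]
  rw [intervalIntegral.integral_comp_sub_div (fun v => |sin v|) hc.ne',
    show t / c - a / c = t / c - (a + π * c) / c + π by field_simp; ring,
    hper.intervalIntegral_add_eq _ 0, hsin, smul_eq_mul, mul_comm]

lemma intervalIntegral.integral_eq_integral_sum_shift {E : Type*} [NormedAddCommGroup E]
    [NormedSpace ℝ E] {F : ℝ → E} (hF : ∀ u v, IntervalIntegrable F volume u v)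
    (a p : ℝ) (n : ℕ) :
    ∫ s in a..a + n * p, F s = ∫ u in a..a + p, ∑ k ∈ range n, F (u + k * p) := by
  have hFk (k : ℕ) : IntervalIntegrable (fun u => F (u + k * p)) volume a (a + p) := by
    simpa using (hF (a + k * p) (a + p + k * p)).comp_add_right (k * p)
  rw [intervalIntegral.integral_finsetSum fun k _ => hFk k]
  have := intervalIntegral.sum_integral_adjacent_intervals (a := fun k : ℕ => a + k * p)
    (f := F) (μ := volume) (n := n) fun k _ => hF _ _
  simp only [Nat.cast_zero, zero_mul, add_zero] at this
  rw [← this]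
  refine sum_congr rfl fun k _ => ?_
  rw [intervalIntegral.integral_comp_add_right]
  congr 1
  push_cast
  ring

lemma abs_integral_antitone_mul_sin_le {G : ℝ → ℝ} (hG : Antitone G) (hG0 : ∀ s, 0 ≤ G s)
    {c : ℝ} (hc : 0 < c) (t a : ℝ) (n : ℕ) :
    |∫ s in a..a + n * (π * c), G s * sin ((t - s) / c)| ≤ 2 * c * G a := by
  set P := π * c
  have hP : 0 ≤ P := by positivity
  have hint (u v : ℝ) : IntervalIntegrable (fun s => G s * sin ((t - s) / c)) volume u v :=
    (hG.antitoneOn _).intervalIntegrable.mul_continuousOn (by fun_prop)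
  have hshift (u : ℝ) (k : ℕ) : G (u + k * P) * sin ((t - (u + k * P)) / c) =
      (-1) ^ k * G (u + k * P) * sin ((t - u) / c) := by
    rw [show (t - (u + k * P)) / c = (t - u) / c - k * π by field_simp; ring,
      sin_sub_nat_mul_pi]
    ring
  have hsum (u : ℝ) (hu : a ≤ u) : |∑ k ∈ range n, (-1) ^ k * G (u + k * P)| ≤ G a := by
    have h := alternating_sum_range_mem_Icc (b := fun k : ℕ => G (u + k * P))
      (fun i j hij => hG (by gcongr)) (fun k => hG0 _) n
    simp only [CharP.cast_eq_zero, zero_mul, add_zero] at h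
    rw [abs_of_nonneg h.1]
    exact h.2.trans (hG hu)
  rw [intervalIntegral.integral_eq_integral_sum_shift hint]
  simp_rw [hshift, ← sum_mul]
  calc |∫ u in a..a + P, (∑ k ∈ range n, (-1) ^ k * G (u + k * P)) * sin ((t - u) / c)|
      ≤ ∫ u in a..a + P, G a * |sin ((t - u) / c)| := by
        have hbound : Continuous fun u => G a * |sin ((t - u) / c)| := by fun_prop
        rw [← Real.norm_eq_abs]
        refine intervalIntegral.norm_integral_le_of_norm_le (by linarith)
          (ae_of_all _ fun u hu => ?_) (hbound.intervalIntegrable _ _)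
        rw [Real.norm_eq_abs, abs_mul]
        exact mul_le_mul_of_nonneg_right (hsum u hu.1.le) (abs_nonneg _)
    _ = 2 * c * G a := by
        rw [intervalIntegral.integral_const_mul, integral_abs_sin_div t a hc]
        ring

lemma abs_integral_mul_sin_le_of_antitoneOn {g : ℝ → ℝ} {a b c : ℝ} (hc : 0 < c) (hab : a ≤ b)
    (hg : AntitoneOn g (Icc a b)) (hgb : 0 ≤ g b) (t : ℝ) :
    |∫ s in a..b, g s * sin ((t - s) / c)| ≤ 2 * c * g a := by
  set G : ℝ → ℝ := fun s => if s ≤ b then g (max s a) else 0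
  have hmem {s : ℝ} (hs : s ≤ b) : max s a ∈ Icc a b := ⟨le_max_right _ _, max_le hs hab⟩
  have hG : Antitone G := by
    intro x y hxy
    simp only [G]
    split_ifs with hy hx hx
    · exact hg (hmem hx) (hmem hy) (max_le_max_right _ hxy)
    · exact absurd (hxy.trans hy) hx
    · exact hgb.trans (hg (hmem hx) ⟨hab, le_rfl⟩ (max_le hx hab))
    · exact le_rfl
  have hG0 (s : ℝ) : 0 ≤ G s := by
    by_cases hs : b < s
    · simp [G, not_le.2 hs]
    · have hGb : G b = g b := by simp [G, hab]
      exact le_trans (by rw [hGb]; exact hgb) (hG (not_lt.1 hs))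
  obtain ⟨n, hn⟩ := exists_nat_ge ((b - a) / (π * c))
  have hbn : b ≤ a + n * (π * c) := by
    have := (div_le_iff₀ (by positivity)).1 hn
    linarith
  have hint (u v : ℝ) : IntervalIntegrable (fun s => G s * sin ((t - s) / c)) volume u v :=
    (hG.antitoneOn _).intervalIntegrable.mul_continuousOn (by fun_prop)
  have hGa : G a = g a := by simp [G, hab]
  have hgG : ∫ s in a..b, g s * sin ((t - s) / c) = ∫ s in a..b, G s * sin ((t - s) / c) :=
    intervalIntegral.integral_congr fun s hs => by
      rw [uIcc_of_le hab] at hs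
      simp [G, hs.2, max_eq_left hs.1]
  have htail : ∫ s in b..a + n * (π * c), G s * sin ((t - s) / c) = 0 :=
    intervalIntegral.integral_zero_ae (ae_of_all _ fun s hs => by
      rw [uIoc_of_le hbn] at hs
      simp [G, not_le.2 hs.1])
  rw [hgG, ← add_zero (∫ s in a..b, _), ← htail,
    intervalIntegral.integral_add_adjacent_intervals (hint _ _) (hint _ _), ← hGa]
  exact abs_integral_antitone_mul_sin_le hG hG0 hc t a n

lemma sub_mul_le_sub_of_antitoneOn_deriv {f f' : ℝ → ℝ} {a b : ℝ} (hab : a < b)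
    (hf : ContinuousOn f (Icc a b)) (hderiv : ∀ x ∈ Ioo a b, HasDerivAt f (f' x) x)
    (hanti : AntitoneOn f' (Ioc a b)) :
    (b - a) * f' b ≤ f b - f a := by
  obtain ⟨ξ, hξ, hslope⟩ := exists_hasDerivAt_eq_slope f f' hab hf hderiv
  have := hanti ⟨hξ.1, hξ.2.le⟩ ⟨hab, le_rfl⟩ hξ.2.le
  rwa [hslope, le_div_iff₀ (sub_pos.2 hab), mul_comm] at this

lemma integral_mul_cos_eq_mul_integral_deriv_mul_sin {ψ ψ' : ℝ → ℝ} {a t c : ℝ} (hat : a ≤ t)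
    (hc : c ≠ 0) (hcont : ContinuousOn ψ (Icc a t))
    (hderiv : ∀ s ∈ Ioo a t, HasDerivAt ψ (ψ' s) s) (hint : IntervalIntegrable ψ' volume a t)
    (hψa : ψ a = 0) :
    ∫ s in a..t, ψ s * cos ((t - s) / c) = c * ∫ s in a..t, ψ' s * sin ((t - s) / c) := by
  have hv (s : ℝ) : HasDerivAt (fun y => -c * sin ((t - y) / c)) (cos ((t - s) / c)) s := by
    have := (((hasDerivAt_id s).const_sub t).div_const c).sin.const_mul (-c)
    refine this.congr_deriv ?_
    simp only [id]
    field_simp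
  rw [intervalIntegral.integral_mul_deriv_eq_deriv_mul_of_hasDerivAt
    (v := fun y => -c * sin ((t - y) / c)) (by rwa [uIcc_of_le hat]) (by fun_prop)
    (by simpa [hat] using hderiv) (fun s _ => hv s) hint
    ((by fun_prop : Continuous fun s => cos ((t - s) / c)).intervalIntegrable _ _)]
  simp only [sub_self, zero_div, sin_zero, mul_zero, hψa, zero_mul, neg_mul, mul_neg,
    intervalIntegral.integral_neg, neg_zero, sub_neg_eq_add, zero_add,
    ← intervalIntegral.integral_const_mul]
  congr 1 with s
  ring

lemma abs_integral_deriv_mul_sin_le {ψ ψ' : ℝ → ℝ} {T c t : ℝ} (hc : 0 < c) (hcT : c ≤ T)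
    (ht : t ∈ Icc 0 T) (hcont : ContinuousOn ψ (Icc 0 T))
    (hderiv : ∀ s ∈ Ioc 0 T, HasDerivAt ψ (ψ' s) s) (hpos : ∀ s ∈ Ioc 0 T, 0 ≤ ψ' s)
    (hanti : AntitoneOn ψ' (Ioc 0 T)) :
    |∫ s in 0..t, ψ' s * sin ((t - s) / c)| ≤ 3 * (ψ c - ψ 0) := by
  have hsub {u v : ℝ} (hu : 0 ≤ u) (hv : v ≤ T) : Ioc u v ⊆ Ioc 0 T := Ioc_subset_Ioc hu hv
  have hint : IntegrableOn ψ' (Ioc 0 T) :=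
    intervalIntegral.integrableOn_deriv_of_nonneg hcont
      (fun x hx => hderiv x (Ioo_subset_Ioc_self hx)) (fun x hx => hpos x (Ioo_subset_Ioc_self hx))
  have hψ'int {u v : ℝ} (hu : 0 ≤ u) (huv : u ≤ v) (hv : v ≤ T) :
      IntervalIntegrable ψ' volume u v :=
    (intervalIntegrable_iff_integrableOn_Ioc_of_le huv).2 (hint.mono_set (hsub hu hv))
  have hFint {u v : ℝ} (hu : 0 ≤ u) (huv : u ≤ v) (hv : v ≤ T) :
      IntervalIntegrable (fun s => ψ' s * sin ((t - s) / c)) volume u v :=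
    (hψ'int hu huv hv).mul_continuousOn (by fun_prop)
  have habs {u v : ℝ} (hu : 0 ≤ u) (huv : u ≤ v) (hv : v ≤ T) :
      |∫ s in u..v, ψ' s * sin ((t - s) / c)| ≤ ψ v - ψ u := by
    rw [← intervalIntegral.integral_eq_sub_of_hasDerivAt_of_le huv
      (hcont.mono (Icc_subset_Icc hu hv))
      (fun x hx => hderiv x (hsub hu hv (Ioo_subset_Ioc_self hx))) (hψ'int hu huv hv),
      ← Real.norm_eq_abs]
    refine intervalIntegral.norm_integral_le_of_norm_le huv (ae_of_all _ fun s hs => ?_)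
      (hψ'int hu huv hv)
    rw [norm_mul, Real.norm_of_nonneg (hpos s (hsub hu hv hs))]
    exact mul_le_of_le_one_right (hpos s (hsub hu hv hs)) (abs_sin_le_one _)
  rcases le_or_gt t c with htc | hct
  · have hψ_le := (abs_nonneg _).trans (habs ht.1 htc hcT)
    linarith [habs le_rfl ht.1 ht.2, abs_nonneg (∫ s in 0..t, ψ' s * sin ((t - s) / c))]
  · have hslope : c * ψ' c ≤ ψ c - ψ 0 := by
      simpa using sub_mul_le_sub_of_antitoneOn_deriv hc
        (hcont.mono (Icc_subset_Icc le_rfl hcT)) (fun x hx => hderiv x ⟨hx.1, hx.2.le.trans hcT⟩)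
        (hanti.mono (hsub le_rfl hcT))
    have hosc := abs_integral_mul_sin_le_of_antitoneOn hc hct.le
      (hanti.mono fun x hx => ⟨hc.trans_le hx.1, hx.2.trans ht.2⟩)
      (hpos t ⟨hc.trans hct, ht.2⟩) t
    rw [← intervalIntegral.integral_add_adjacent_intervals (hFint le_rfl hc.le hcT)
      (hFint hc.le hct.le ht.2)]
    linarith [abs_add_le (∫ s in 0..c, ψ' s * sin ((t - s) / c))
      (∫ s in c..t, ψ' s * sin ((t - s) / c)), habs le_rfl hc.le hcT]

lemma abs_sqrt_mul_integral_mul_cos_le {ψ ψ' : ℝ → ℝ} {T lam t : ℝ} (hlam : 0 < lam)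
    (hlamT : √lam ≤ T) (ht : t ∈ Icc 0 T) (hψ0 : ψ 0 = 0) (hcont : ContinuousOn ψ (Icc 0 T))
    (hderiv : ∀ s ∈ Ioc 0 T, HasDerivAt ψ (ψ' s) s) (hpos : ∀ s ∈ Ioc 0 T, 0 ≤ ψ' s)
    (hanti : AntitoneOn ψ' (Ioc 0 T)) :
    |√(2 / T) * ∫ s in 0..t, ψ s * cos ((t - s) / √lam)| ≤ 3 * √(2 * lam / T) * ψ √lam := by
  have hc : 0 < √lam := sqrt_pos.2 hlam
  have hsub : Ioo 0 t ⊆ Ioc 0 T := fun x hx => ⟨hx.1, hx.2.le.trans ht.2⟩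
  have hint : IntervalIntegrable ψ' volume 0 t :=
    intervalIntegral.intervalIntegrable_deriv_of_nonneg
      (hcont.mono (by rw [uIcc_of_le ht.1]; exact Icc_subset_Icc le_rfl ht.2))
      (by simpa [ht.1] using fun x hx => hderiv x (hsub hx))
      (by simpa [ht.1] using fun x hx => hpos x (hsub hx))
  rw [integral_mul_cos_eq_mul_integral_deriv_mul_sin ht.1 hc.ne'
    (hcont.mono (Icc_subset_Icc le_rfl ht.2)) (fun x hx => hderiv x (hsub hx)) hint hψ0,
    mul_div_right_comm, sqrt_mul' _ hlam.le, abs_mul, abs_mul, abs_of_nonneg (sqrt_nonneg _),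
    abs_of_pos hc]
  have := abs_integral_deriv_mul_sin_le hc hlamT ht hcont hderiv hpos hanti
  rw [hψ0, sub_zero] at this
  calc √(2 / T) * (√lam * |∫ s in 0..t, ψ' s * sin ((t - s) / √lam)|)
      ≤ √(2 / T) * (√lam * (3 * ψ √lam)) := by gcongr
    _ = 3 * (√(2 / T) * √lam) * ψ √lam := by ring

lemma sqrt_mul_le_mul_rpow {lam T H β x : ℝ} (hlam : 0 ≤ lam) (hβ : 0 ≤ β)
    (hx : x ≤ H * √lam ^ β) :
    √(2 * lam / T) * x ≤ √(2 / T) * H * lam ^ ((1 + β) / 2) := by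
  have hpow : √lam * √lam ^ β = lam ^ ((1 + β) / 2) := by
    rw [← rpow_one_add' (sqrt_nonneg _) (by positivity), sqrt_eq_rpow, ← rpow_mul hlam]
    ring_nf
  rw [mul_div_right_comm, sqrt_mul' _ hlam, ← hpow]
  calc √(2 / T) * √lam * x ≤ √(2 / T) * √lam * (H * √lam ^ β) := by gcongr
    _ = √(2 / T) * H * (√lam * √lam ^ β) := by ring

lemma rpow_neg_two_rpow_div_two {r : ℝ} (hr : 0 < r) (x : ℝ) :
    (r ^ (-2 : ℝ)) ^ (x / 2) = r ^ (-x) := by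
  rw [← rpow_mul hr.le]
  ring_nf

lemma le_pi_mul_sub_half_div {T : ℝ} (hT : 0 < T) {j : ℕ} (hj : 1 ≤ j) :
    π * j / (2 * T) ≤ π * ((j : ℝ) - 1 / 2) / T := by
  have : (1 : ℝ) ≤ j := by exact_mod_cast hj
  rw [div_le_div_iff₀ (by positivity) hT]
  nlinarith [mul_nonneg (mul_nonneg pi_pos.le hT.le) (sub_nonneg.2 this)]

lemma rpow_neg_le_of_le_pi_mul_div {T r γ : ℝ} (hT : 0 < T) (hγ : 0 ≤ γ) {j : ℕ} (hj : 1 ≤ j)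
    (hr : π * j / (2 * T) ≤ r) :
    r ^ (-γ) ≤ (2 * T / π) ^ γ * (j : ℝ) ^ (-γ) := by
  have hj0 : (0 : ℝ) < j := by exact_mod_cast hj
  calc r ^ (-γ) ≤ (π * j / (2 * T)) ^ (-γ) :=
        rpow_le_rpow_of_nonpos (by positivity) hr (neg_nonpos.2 hγ)
    _ = (2 * T / π) ^ γ * (j : ℝ) ^ (-γ) := by
        rw [show π * j / (2 * T) = (2 * T / π)⁻¹ * j by field_simp,
          mul_rpow (by positivity) hj0.le, inv_rpow (by positivity), rpow_neg (by positivity),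
          inv_inv]

lemma inv_pi_mul_sub_half_div_le {T : ℝ} (hT : 0 < T) {j : ℕ} (hj : 1 ≤ j) :
    (π * ((j : ℝ) - 1 / 2) / T)⁻¹ ≤ T := by
  have : (1 : ℝ) ≤ j := by exact_mod_cast hj
  rw [inv_div]
  exact div_le_self hT.le (by nlinarith [pi_gt_three])

theorem stmt16_general (T β Hβ : ℝ) (hT : 0 < T) (hβ : 0 < β) (hHβ : 0 ≤ Hβ)
    (ψ ψ' : ℝ → ℝ) (hψ0 : ψ 0 = 0)
    (hHol : ∀ s ∈ Set.Icc (0:ℝ) T, ∀ t ∈ Set.Icc (0:ℝ) T,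
      |ψ s - ψ t| ≤ Hβ * |s - t| ^ β)
    (hderiv : ∀ t ∈ Set.Ioc (0:ℝ) T, HasDerivAt ψ (ψ' t) t)
    (hψ'pos : ∀ t ∈ Set.Ioc (0:ℝ) T, 0 < ψ' t)
    (hψ'mono : ∀ s ∈ Set.Ioc (0:ℝ) T, ∀ t ∈ Set.Ioc (0:ℝ) T, s ≤ t → ψ' t ≤ ψ' s)
    (lam : ℕ → ℝ) (hlam : ∀ j : ℕ, lam j = (π * ((j:ℝ) - 1/2) / T) ^ (-(2:ℝ)))
    (f : ℕ → ℝ → ℝ)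
    (hf : ∀ (j : ℕ) (t : ℝ), f j t =
      Real.sqrt (2/T) * ∫ s in (0:ℝ)..t, ψ s * Real.cos ((t - s) / Real.sqrt (lam j))) :
    (∀ j : ℕ, 1 ≤ j → ∀ t ∈ Set.Icc (0:ℝ) T,
      |f j t| ≤ 3 * Real.sqrt (2 * lam j / T) * ψ (Real.sqrt (lam j))) ∧
    ∃ C C' : ℝ,
      (∀ j : ℕ, 1 ≤ j →
        3 * Real.sqrt (2 * lam j / T) * ψ (Real.sqrt (lam j)) ≤
          C * lam j ^ ((1 + β)/2)) ∧
      (∀ j : ℕ, 1 ≤ j → C * lam j ^ ((1 + β)/2) ≤ C' * (j:ℝ) ^ (-(1 + β))) := by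
  have hr0 (j : ℕ) (hj : 1 ≤ j) : 0 < π * ((j : ℝ) - 1 / 2) / T := by
    have : (0 : ℝ) < j := by exact_mod_cast hj
    exact lt_of_lt_of_le (by positivity) (le_pi_mul_sub_half_div hT hj)
  have hlam0 (j : ℕ) (hj : 1 ≤ j) : 0 < lam j := hlam j ▸ rpow_pos_of_pos (hr0 j hj) _
  have hsqrt (j : ℕ) (hj : 1 ≤ j) : √(lam j) = (π * ((j : ℝ) - 1 / 2) / T)⁻¹ := by
    rw [hlam, sqrt_eq_rpow, rpow_neg_two_rpow_div_two (hr0 j hj), rpow_neg_one]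
  have hsqrtT (j : ℕ) (hj : 1 ≤ j) : √(lam j) ≤ T :=
    hsqrt j hj ▸ inv_pi_mul_sub_half_div_le hT hj
  refine ⟨fun j hj t ht => ?_, 3 * √(2 / T) * Hβ, 3 * √(2 / T) * Hβ * (2 * T / π) ^ (1 + β),
    fun j hj => ?_, fun j hj => ?_⟩
  · rw [hf]
    exact abs_sqrt_mul_integral_mul_cos_le (hlam0 j hj) (hsqrtT j hj) ht hψ0
      (continuousOn_of_abs_sub_le_mul_rpow hβ hHol) hderiv (fun s hs => (hψ'pos s hs).le)
      hψ'mono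
  · have hψ : ψ √(lam j) ≤ Hβ * √(lam j) ^ β := by
      have := hHol _ ⟨sqrt_nonneg _, hsqrtT j hj⟩ 0 ⟨le_rfl, hT.le⟩
      rw [hψ0, sub_zero, sub_zero, abs_of_nonneg (sqrt_nonneg _)] at this
      exact (le_abs_self _).trans this
    rw [mul_assoc, mul_assoc 3, mul_assoc 3]
    exact mul_le_mul_of_nonneg_left (sqrt_mul_le_mul_rpow (hlam0 j hj).le hβ.le hψ)
      (by norm_num)
  · rw [hlam j, rpow_neg_two_rpow_div_two (hr0 j hj), mul_assoc (3 * √(2 / T) * Hβ)]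
    exact mul_le_mul_of_nonneg_left
      (rpow_neg_le_of_le_pi_mul_div hT (by positivity) hj (le_pi_mul_sub_half_div hT hj))
      (by positivity)

/-- if `ψ(0) = 0`, `ψ` is `β`-Hölder on `[0,T]` and differentiable on
`(0,T]` with `ψ'` positive and nonincreasing there, then with `λ_j = (π(j-1/2)/T)^{-2}`
and `f_j(t) = √(2/T) ∫₀^t ψ(s) cos((t-s)/√λ_j) ds`:
`‖f_j‖_∞ ≤ 3√(2λ_j/T) ψ(√λ_j) ≤ C λ_j^{(1+β)/2} ≤ C' j^{-(1+β)}`. -/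
theorem stmt16 (T β Hβ : ℝ) (hT : 0 < T) (hβ : 0 < β) (hβ1 : β ≤ 1) (hHβ : 0 ≤ Hβ)
    (ψ ψ' : ℝ → ℝ) (hψint : IntegrableOn ψ (Set.Icc 0 T)) (hψ0 : ψ 0 = 0)
    (hHol : ∀ s ∈ Set.Icc (0:ℝ) T, ∀ t ∈ Set.Icc (0:ℝ) T,
      |ψ s - ψ t| ≤ Hβ * |s - t| ^ β)
    (hderiv : ∀ t ∈ Set.Ioc (0:ℝ) T, HasDerivAt ψ (ψ' t) t)
    (hψ'pos : ∀ t ∈ Set.Ioc (0:ℝ) T, 0 < ψ' t)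
    (hψ'mono : ∀ s ∈ Set.Ioc (0:ℝ) T, ∀ t ∈ Set.Ioc (0:ℝ) T, s ≤ t → ψ' t ≤ ψ' s)
    (lam : ℕ → ℝ) (hlam : ∀ j : ℕ, lam j = (π * ((j:ℝ) - 1/2) / T) ^ (-(2:ℝ)))
    (f : ℕ → ℝ → ℝ)
    (hf : ∀ (j : ℕ) (t : ℝ), f j t =
      Real.sqrt (2/T) * ∫ s in (0:ℝ)..t, ψ s * Real.cos ((t - s) / Real.sqrt (lam j))) :
    (∀ j : ℕ, 1 ≤ j → ∀ t ∈ Set.Icc (0:ℝ) T,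
      |f j t| ≤ 3 * Real.sqrt (2 * lam j / T) * ψ (Real.sqrt (lam j))) ∧
    ∃ C C' : ℝ,
      (∀ j : ℕ, 1 ≤ j →
        3 * Real.sqrt (2 * lam j / T) * ψ (Real.sqrt (lam j)) ≤
          C * lam j ^ ((1 + β)/2)) ∧
      (∀ j : ℕ, 1 ≤ j → C * lam j ^ ((1 + β)/2) ≤ C' * (j:ℝ) ^ (-(1 + β))) :=
  stmt16_general T β Hβ hT hβ hHβ ψ ψ' hψ0 hHol hderiv hψ'pos hψ'mono lam hlam f hf
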